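/- Let A be an associative unital algebra over ℂ, let N ≥ 1, and for i = 1, 2 let (e_{i,1}, …, e_{i,N}) be idempotents in A such that the 2N elements e_{i,l} pairwise commute; set g_{i,l} := 1 − e_{i,l} and, for 0 ≤ k ≤ N, P_{i,k} := Σ_{S ⊆ {1,…,N}, |S| = k} (Π_{l ∈ S} g_{i,l}) · (Π_{l ∉ S} e_{i,l}). For f : ℤ → ℂ define f̂_i := Σ_{k=0}^{N} f(k) • P_{i,k}, and let τ_r f(k) := f(k + r) for r ∈ ℤ. Fix r₁, r₂ with 0 ≤ r_i ≤ N and let R ∈ A commute with e_{i,l} for every i ∈ {1,2} and every l > r_i. For i = 1, 2, let Q_i^{(a)} := Π_{l=1}^{r_i} p_{i,l}^{(a)} and Q_i^{(b)} := Π_{l=1}^{r_i} p_{i,l}^{(b)}, where each p_{i,l}^{(•)} ∈ {e_{i,l}, g_{i,l}}, and let n_i^{(a)}, n_i^{(b)} denote the number of factors equal to g_{i,l} in Q_i^{(a)}, Q_i^{(b)} respectively; set Q^{(a)} := Q_1^{(a)} Q_2^{(a)}, Q^{(b)} := Q_1^{(b)} Q_2^{(b)}, and n_i := n_i^{(b)}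 − n_i^{(a)}. Then for all f₁, f₂ : ℤ → ℂ: Q^{(a)} · R · f̂₁^{(1)} · f̂₂^{(2)} · Q^{(b)} = Q^{(a)} · (τ_{n₁} f₁)̂^{(1)} · (τ_{n₂} f₂)̂^{(2)} · R · Q^{(b)}, where f̂^{(i)} := Σ_{k=0}^{N} f(k) • P_{i,k}. -/

import Mathlib

/-!
In a commutative ring, `badP e k` is the coefficient of `X ^ k` in `∏ l, (e l + X * (1 - e l))`.
Multiplying by a pattern product `Q` over the first `r` sites, each of those factors collapses by
idempotency to `X ^ [p l = 1 - e l] * p l`, so `Q * P_k = Q * P'_{k - n}` where `n` is the `g`-count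
of `Q` and `P'` counts only the sites `≥ r`. Hence `Q f̂ = Q (τ_n f)̂'` with a weighting operator built
from the sites `≥ r` alone, which commutes with `R`; sandwiching between `Q^{(a)}` and `Q^{(b)}` gives
the shift `n^{(b)} - n^{(a)}`. Everything except `R` lives in the commutative subalgebra generated by
the `e i l`, so the combinatorics can be done there.
-/

open Finset

/-- Product of a family of (pairwise commuting) elements over a finite index
set, taken in increasing order of the indices. -/
def oprod {ι M : Type*} [LinearOrder ι] [Monoid M] (S : Finset ι) (f : ι → M) : M :=
  ((S.sort (· ≤ ·)).map f).prod

/-- The counting element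
`P n = Σ_{S ⊆ {1,…,N}, |S| = n} (Π_{l ∈ S} (1 - e l)) · (Π_{l ∉ S} e l)`. -/
def badP {R : Type*} [Ring R] {N : ℕ} (e : Fin N → R) (n : ℕ) : R :=
  ∑ S ∈ powersetCard n (univ : Finset (Fin N)),
    oprod S (fun l => 1 - e l) * oprod Sᶜ e

/-- The weighting operator `f̂ := Σ_{k=0}^N f(k) • P_k` for `f : ℤ → ℂ`. -/
noncomputable def fhat {A : Type*} [Ring A] [Algebra ℂ A] {N : ℕ}
    (e : Fin N → A) (f : ℤ → ℂ) : A :=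
  ∑ k ∈ Finset.range (N + 1), f (k : ℤ) • badP e k

/-- The pattern product `Q = Π_{l=1}^{r} p_l` over the first `r` sites, where
`p_l = 1 - e_l` when `b l = true` and `p_l = e_l` otherwise. -/
def patProd {A : Type*} [Ring A] {N : ℕ} (e : Fin N → A) (r : ℕ)
    (b : Fin N → Bool) : A :=
  oprod (univ.filter fun l : Fin N => (l : ℕ) < r)
    (fun l => if b l then 1 - e l else e l)

/-- The number of `g`-factors (`b l = true`) among the first `r` sites. -/
def gcount {N : ℕ} (r : ℕ) (b : Fin N → Bool) : ℕ :=
  ((univ.filter fun l : Fin N => (l : ℕ) < r).filter fun l => b l = true).card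

open Polynomial

section Oprod
variable {ι M : Type*} [LinearOrder ι]

theorem oprod_eq_prod [CommMonoid M] (S : Finset ι) (f : ι → M) : oprod S f = ∏ l ∈ S, f l := by
  rw [oprod, prod_eq_multiset_prod, ← sort_eq S (· ≤ ·), Multiset.map_coe, Multiset.prod_coe]

theorem map_oprod {M' F : Type*} [Monoid M] [Monoid M'] [FunLike F M M'] [MonoidHomClass F M M']
    (φ : F) (S : Finset ι) (f : ι → M) : φ (oprod S f) = oprod S (fun l => φ (f l)) := by
  rw [oprod, oprod, map_list_prod, List.map_map]
  rfl

theorem commute_oprod [Monoid M] {x : M} (S : Finset ι) (f : ι → M)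
    (h : ∀ l ∈ S, Commute x (f l)) : Commute x (oprod S f) :=
  Commute.list_prod_right _ _ fun _ hy => by
    obtain ⟨l, hl, rfl⟩ := List.mem_map.1 hy
    exact h l ((mem_sort _).1 hl)

end Oprod

theorem Finset.sum_range_succ_eq_sum_shift {M : Type*} [AddCommMonoid M] {g : ℕ → M} {N m : ℕ}
    (hlow : ∀ k < m, g k = 0) (hhigh : ∀ k, N < k → g k = 0) :
    ∑ k ∈ range (N + 1), g k = ∑ j ∈ range (N + 1), g (j + m) :=
  calc ∑ k ∈ range (N + 1), g k = ∑ k ∈ range (m + (N + 1)), g k :=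
        sum_subset (range_subset_range.2 (by omega)) fun k _ hk => hhigh k (by simpa using hk)
    _ = ∑ j ∈ range (N + 1), g (j + m) := by
        rw [sum_range_add, sum_eq_zero fun k hk => hlow k (mem_range.1 hk), zero_add]
        simp only [add_comm m]

/-- Setting the sites before `r` to `1` kills their `g`-factors, so `badP (tailFamily e r)` counts
`g`-factors among the sites `≥ r` only. -/
def tailFamily {A : Type*} [Ring A] {N : ℕ} (e : Fin N → A) (r : ℕ) : Fin N → A :=
  fun l => if r ≤ (l : ℕ) then e l else 1

section Ring
variable {A : Type*} [Ring A] {N : ℕ}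

theorem badP_eq_zero_of_lt (e : Fin N → A) {k : ℕ} (hk : N < k) : badP e k = 0 := by
  rw [badP, powersetCard_eq_empty.2 (by simpa using hk), sum_empty]

theorem commute_badP {x : A} {e : Fin N → A} (h : ∀ l, Commute x (e l)) (k : ℕ) :
    Commute x (badP e k) :=
  Commute.sum_right _ _ _ fun _ _ =>
    (commute_oprod _ _ fun l _ => (Commute.one_right x).sub_right (h l)).mul_right
      (commute_oprod _ _ fun l _ => h l)

theorem commute_fhat [Algebra ℂ A] {x : A} {e : Fin N → A} (h : ∀ l, Commute x (e l))
    (f : ℤ → ℂ) : Commute x (fhat e f) :=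
  Commute.sum_right _ _ _ fun k _ => (commute_badP h k).smul_right _

theorem commute_tailFamily {x : A} {e : Fin N → A} {r : ℕ}
    (h : ∀ l : Fin N, r ≤ (l : ℕ) → Commute x (e l)) (l : Fin N) :
    Commute x (tailFamily e r l) := by
  unfold tailFamily
  split_ifs with hl
  exacts [h l hl, Commute.one_right x]

variable {A' F : Type*} [Ring A'] [FunLike F A A']

theorem map_badP [RingHomClass F A A'] (φ : F) (e : Fin N → A) (k : ℕ) :
    φ (badP e k) = badP (fun l => φ (e l)) k := by
  simp only [badP, map_sum, map_mul, map_oprod, map_sub, map_one]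

theorem map_patProd [RingHomClass F A A'] (φ : F) (e : Fin N → A) (r : ℕ) (b : Fin N → Bool) :
    φ (patProd e r b) = patProd (fun l => φ (e l)) r b := by
  simp only [patProd, map_oprod, apply_ite φ, map_sub, map_one]

theorem map_tailFamily [RingHomClass F A A'] (φ : F) (e : Fin N → A) (r : ℕ) :
    (fun l => φ (tailFamily e r l)) = tailFamily (fun l => φ (e l)) r := by
  funext l
  simp only [tailFamily, apply_ite φ, map_one]

theorem map_fhat [Algebra ℂ A] [Algebra ℂ A'] [AlgHomClass F ℂ A A'] (φ : F) (e : Fin N → A)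
    (f : ℤ → ℂ) : φ (fhat e f) = fhat (fun l => φ (e l)) f := by
  simp only [fhat, map_sum, map_smul, map_badP]

end Ring

section CommRing
variable {B : Type*} [CommRing B] {N : ℕ}

noncomputable def countingPoly (e : Fin N → B) : B[X] :=
  ∏ l, (C (1 - e l) * X + C (e l))

theorem coeff_countingPoly (e : Fin N → B) (k : ℕ) : (countingPoly e).coeff k = badP e k := by
  have hterm : ∀ t : Finset (Fin N), (∏ l ∈ t, C (1 - e l) * X) * ∏ l ∈ univ \ t, C (e l) =
      C ((∏ l ∈ t, (1 - e l)) * ∏ l ∈ tᶜ, e l) * X ^ t.card := fun t => by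
    rw [prod_mul_distrib, prod_const, compl_eq_univ_sdiff, C_mul, map_prod, map_prod]
    ring
  simp only [countingPoly, prod_add, hterm, finsetSum_coeff, coeff_C_mul_X_pow, badP,
    oprod_eq_prod, powersetCard_eq_filter, sum_filter, eq_comm]

theorem pattern_mul_countingFactor {x : B} (hx : x * x = x) (b : Bool) :
    C (if b then 1 - x else x) * (C (1 - x) * X + C x) =
      X ^ (if b then 1 else 0) * C (if b then 1 - x else x) := by
  have hg : (1 - x) * (1 - x) = 1 - x := by
    rw [sub_mul, one_mul, mul_sub, mul_one, hx, sub_self, sub_zero]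
  have hxg : x * (1 - x) = 0 := by rw [mul_sub, mul_one, hx, sub_self]
  cases b
  · simp only [Bool.false_eq_true, if_false, pow_zero, one_mul, mul_add, ← mul_assoc, ← C_mul,
      hx, hxg, map_zero, zero_mul, zero_add]
  · simp only [if_true, pow_one, mul_add, ← mul_assoc, ← C_mul, hg, mul_comm (1 - x) x, hxg,
      map_zero, add_zero]
    exact (X_mul_C _).symm

variable {e : Fin N → B} (hidem : ∀ l, e l * e l = e l)
include hidem

theorem patProd_mul_countingPoly (r : ℕ) (b : Fin N → Bool) :
    C (patProd e r b) * countingPoly e =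
      X ^ gcount r b * (C (patProd e r b) * countingPoly (tailFamily e r)) := by
  have hX : X ^ gcount r b = ∏ l : Fin N, (X : B[X]) ^ (if (l : ℕ) < r ∧ b l then 1 else 0) := by
    rw [prod_pow_eq_pow_sum, sum_boole, gcount, filter_filter]
    rfl
  rw [hX, patProd, oprod_eq_prod, prod_filter, map_prod, countingPoly, countingPoly,
    ← prod_mul_distrib, ← prod_mul_distrib, ← prod_mul_distrib]
  refine prod_congr rfl fun l _ => ?_
  by_cases hl : (l : ℕ) < r
  · simp only [hl, true_and, if_true, tailFamily, not_le.2 hl, if_false, sub_self, map_zero,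
      map_one, zero_mul, zero_add, mul_one]
    exact pattern_mul_countingFactor (hidem l) (b l)
  · simp [hl, tailFamily, not_lt.1 hl]

theorem patProd_mul_badP (r : ℕ) (b : Fin N → Bool) (k : ℕ) :
    patProd e r b * badP e k =
      if gcount r b ≤ k then patProd e r b * badP (tailFamily e r) (k - gcount r b) else 0 := by
  simpa only [coeff_C_mul, coeff_X_pow_mul', coeff_countingPoly] using
    congrArg (coeff · k) (patProd_mul_countingPoly hidem r b)

variable [Algebra ℂ B]

theorem patProd_mul_fhat (r : ℕ) (b : Fin N → Bool) (f : ℤ → ℂ) :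
    patProd e r b * fhat e f =
      patProd e r b * fhat (tailFamily e r) (fun k => f (k + gcount r b)) := by
  simp only [fhat, mul_sum, mul_smul_comm]
  rw [sum_range_succ_eq_sum_shift (m := gcount r b)]
  · refine sum_congr rfl fun j _ => ?_
    rw [patProd_mul_badP hidem, if_pos (by omega), Nat.add_sub_cancel, Nat.cast_add]
  · intro k hk
    rw [patProd_mul_badP hidem, if_neg (by omega), smul_zero]
  · intro k hk
    rw [badP_eq_zero_of_lt e hk, mul_zero, smul_zero]

theorem patProd_mul_fhat_shift (r : ℕ) (ba bb : Fin N → Bool) (f : ℤ → ℂ) :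
    patProd e r ba * fhat e (fun k => f (k + (gcount r bb - gcount r ba))) =
      patProd e r ba * fhat (tailFamily e r) (fun k => f (k + gcount r bb)) := by
  rw [patProd_mul_fhat hidem]
  simp only [add_assoc, add_sub_cancel]

end CommRing

theorem mul_mul_mul_eq_of_mul_eq {M : Type*} [CommMonoid M] {a b x y z w : M}
    (h₁ : a * x = a * y) (h₂ : b * z = b * w) : a * b * (x * z) = a * b * (y * w) := by
  rw [mul_mul_mul_comm, h₁, h₂, mul_mul_mul_comm]

theorem shift_past_of_mul_eq_mul {A C F : Type*} [Monoid A] [CommMonoid C] [FunLike F C A]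
    [MonoidHomClass F C A] (φ : F) {qa qb f g h : C} {R : A}
    (hb : qb * f = qb * h) (ha : qa * g = qa * h) (hR : Commute R (φ h)) :
    φ qa * R * φ f * φ qb = φ qa * φ g * R * φ qb :=
  calc φ qa * R * φ f * φ qb = φ qa * R * φ (qb * f) := by
        rw [mul_assoc _ (φ f), ← map_mul, mul_comm f]
    _ = φ qa * R * φ h * φ qb := by
        rw [hb, mul_comm, map_mul]
        simp only [mul_assoc]
    _ = φ (qa * h) * R * φ qb := by rw [mul_assoc (φ qa), hR.eq, ← mul_assoc, map_mul]
    _ = φ qa * φ g * R * φ qb := by rw [← ha, map_mul]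

theorem pickl_shift_two_class_general {A : Type*} [Ring A] [Algebra ℂ A] {N : ℕ}
    (e : Fin 2 → Fin N → A)
    (hidem : ∀ i l, e i l * e i l = e i l)
    (hcomm : ∀ i l i' l', Commute (e i l) (e i' l'))
    (r : Fin 2 → ℕ)
    (R : A) (hR : ∀ i (l : Fin N), r i ≤ (l : ℕ) → Commute R (e i l))
    (ba bb : Fin 2 → Fin N → Bool) (f₁ f₂ : ℤ → ℂ) :
    (patProd (e 0) (r 0) (ba 0) * patProd (e 1) (r 1) (ba 1)) * R *
        fhat (e 0) f₁ * fhat (e 1) f₂ *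
        (patProd (e 0) (r 0) (bb 0) * patProd (e 1) (r 1) (bb 1))
      = (patProd (e 0) (r 0) (ba 0) * patProd (e 1) (r 1) (ba 1)) *
        fhat (e 0)
          (fun k => f₁ (k + ((gcount (r 0) (bb 0) : ℤ) - (gcount (r 0) (ba 0) : ℤ)))) *
        fhat (e 1)
          (fun k => f₂ (k + ((gcount (r 1) (bb 1) : ℤ) - (gcount (r 1) (ba 1) : ℤ)))) *
        R *
        (patProd (e 0) (r 0) (bb 0) * patProd (e 1) (r 1) (bb 1)) := by
  open scoped IsMulCommutative in
  let C := Algebra.adjoin ℂ (Set.range fun p : Fin 2 × Fin N => e p.1 p.2)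
  have : IsMulCommutative C := Algebra.isMulCommutative_adjoin ℂ <| by
    rintro _ ⟨p, rfl⟩ _ ⟨q, rfl⟩
    exact hcomm p.1 p.2 q.1 q.2
  let ê : Fin 2 → Fin N → C := fun i l => ⟨e i l, Algebra.subset_adjoin ⟨(i, l), rfl⟩⟩
  have hê : ∀ i l, ê i l * ê i l = ê i l := fun i l => Subtype.ext (hidem i l)
  have h := shift_past_of_mul_eq_mul C.val (R := R)
    (mul_mul_mul_eq_of_mul_eq (patProd_mul_fhat (hê 0) (r 0) (bb 0) f₁)
      (patProd_mul_fhat (hê 1) (r 1) (bb 1) f₂))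
    (mul_mul_mul_eq_of_mul_eq (patProd_mul_fhat_shift (hê 0) (r 0) (ba 0) (bb 0) f₁)
      (patProd_mul_fhat_shift (hê 1) (r 1) (ba 1) (bb 1) f₂))
  simp only [map_mul, map_fhat, map_patProd, map_tailFamily, mul_assoc] at h ⊢
  exact h ((commute_fhat (commute_tailFamily (hR 0)) _).mul_right
    (commute_fhat (commute_tailFamily (hR 1)) _))

/-- **Two-class Pickl shift lemma** (Lemma 5.2 of the paper, adapted from
Knowles–Pickl).  With two commuting families of idempotents `e i l`
(`i ∈ {1,2}`, `l ∈ {1,…,N}`), counting operators `P_{i,k}`, weighting operators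
`f̂^{(i)} = Σ_k f(k) • P_{i,k}` and shifts `τ_r f (k) = f (k + r)`, for any `R`
commuting with all `e i l` with `l > r i`, and any pattern products
`Q^{(a)} = Q₁^{(a)} Q₂^{(a)}`, `Q^{(b)} = Q₁^{(b)} Q₂^{(b)}` over the first
`r i` sites of each class with `g`-counts `n_i^{(a)}, n_i^{(b)}`, setting
`n_i = n_i^{(b)} - n_i^{(a)}`, one has
`Q^{(a)} R f̂₁^{(1)} f̂₂^{(2)} Q^{(b)} = Q^{(a)} (τ_{n₁}f₁)̂^{(1)} (τ_{n₂}f₂)̂^{(2)} R Q^{(b)}`. -/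
theorem pickl_shift_two_class {A : Type*} [Ring A] [Algebra ℂ A] {N : ℕ}
    (hN : 1 ≤ N) (e : Fin 2 → Fin N → A)
    (hidem : ∀ i l, e i l * e i l = e i l)
    (hcomm : ∀ i l i' l', Commute (e i l) (e i' l'))
    (r : Fin 2 → ℕ) (hr : ∀ i, r i ≤ N)
    (R : A) (hR : ∀ i (l : Fin N), r i ≤ (l : ℕ) → Commute R (e i l))
    (ba bb : Fin 2 → Fin N → Bool) (f₁ f₂ : ℤ → ℂ) :
    (patProd (e 0) (r 0) (ba 0) * patProd (e 1) (r 1) (ba 1)) * R *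
        fhat (e 0) f₁ * fhat (e 1) f₂ *
        (patProd (e 0) (r 0) (bb 0) * patProd (e 1) (r 1) (bb 1))
      = (patProd (e 0) (r 0) (ba 0) * patProd (e 1) (r 1) (ba 1)) *
        fhat (e 0)
          (fun k => f₁ (k + ((gcount (r 0) (bb 0) : ℤ) - (gcount (r 0) (ba 0) : ℤ)))) *
        fhat (e 1)
          (fun k => f₂ (k + ((gcount (r 1) (bb 1) : ℤ) - (gcount (r 1) (ba 1) : ℤ)))) *
        R *
        (patProd (e 0) (r 0) (bb 0) * patProd (e 1) (r 1) (bb 1)) :=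
  pickl_shift_two_class_general e hidem hcomm r R hR ba bb f₁ f₂
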